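/- Lemma 4 (gradient approximation error of the smoothing): Let d ≥ 1, L ≥ 0, μ > 0, and let f : ℝ^d → ℝ be differentiable and L-smooth. Then for every x ∈ ℝ^d, ‖∇f_μ(x) − ∇f(x)‖ ≤ (μ/2) L (d + 3)^{3/2}. -/

import Mathlib

/-!
Differentiating under the integral sign (the integrand's derivative grows at most linearly in `u`,
and `N(0, I)` has finite second moment) gives `∇f_μ(x) = E[∇f(x + μu)]`, hence
`‖∇f_μ(x) - ∇f(x)‖ ≤ E‖∇f(x + μu) - ∇f(x)‖ ≤ μ L E‖u‖`. Finally
`E‖u‖ ≤ (1 + E‖u‖²) / 2 = (1 + d) / 2 ≤ (d + 3)^{3/2} / 2`.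
-/

open MeasureTheory ProbabilityTheory

/-- The standard Gaussian measure `N(0, I_d)` on `ℝ^d`. -/
noncomputable def stdGaussian (d : ℕ) : Measure (EuclideanSpace ℝ (Fin d)) :=
  (Measure.pi fun _ : Fin d => gaussianReal 0 1).map
    (MeasurableEquiv.toLp 2 (Fin d → ℝ))

open scoped NNReal

lemma LipschitzWith.norm_le_norm_add_mul {α β : Type*} [SeminormedAddCommGroup α]
    [SeminormedAddCommGroup β] {g : α → β} {K : ℝ≥0} (hg : LipschitzWith K g) (x y : α) :
    ‖g y‖ ≤ ‖g x‖ + K * ‖y - x‖ := by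
  have h := hg.dist_le_mul y x
  rw [dist_eq_norm, dist_eq_norm] at h
  linarith [norm_le_norm_add_norm_sub' (g y) (g x)]

section Smoothing

variable {E F : Type*} [NormedAddCommGroup E] [NormedSpace ℝ E] [NormedAddCommGroup F]
  [NormedSpace ℝ F] {f : E → F} {K : ℝ≥0}

lemma norm_sub_le_of_lipschitzWith_fderiv (hf : Differentiable ℝ f)
    (hf' : LipschitzWith K (fderiv ℝ f)) (x v : E) :
    ‖f (x + v) - f x‖ ≤ (‖fderiv ℝ f x‖ + K * ‖v‖) * ‖v‖ := by
  have h := (convex_closedBall x ‖v‖).norm_image_sub_le_of_norm_fderiv_le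
    (C := ‖fderiv ℝ f x‖ + K * ‖v‖) (fun z _ => hf z) (fun z hz => ?_)
    (Metric.mem_closedBall_self (norm_nonneg v)) (show x + v ∈ Metric.closedBall x ‖v‖ by simp)
  · simpa using h
  · rw [Metric.mem_closedBall, dist_eq_norm] at hz
    calc ‖fderiv ℝ f z‖ ≤ ‖fderiv ℝ f x‖ + K * ‖z - x‖ := hf'.norm_le_norm_add_mul x z
      _ ≤ ‖fderiv ℝ f x‖ + K * ‖v‖ := by gcongr

variable [MeasurableSpace E] [BorelSpace E] [SecondCountableTopology E] {ν : Measure E}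

lemma integrable_comp_add_smul [IsFiniteMeasure ν] (hf : Differentiable ℝ f)
    (hf' : LipschitzWith K (fderiv ℝ f)) (hν : MemLp id 2 ν) (x : E) (t : ℝ) :
    Integrable (fun u => f (x + t • u)) ν := by
  have hnorm : Integrable (‖·‖) ν := (hν.integrable one_le_two).norm
  have hnorm_sq : Integrable (‖·‖ ^ 2) ν := hν.integrable_norm_pow two_ne_zero
  refine Integrable.mono'
    (g := fun u => ‖f x‖ + ‖fderiv ℝ f x‖ * |t| * ‖u‖ + K * t ^ 2 * ‖u‖ ^ 2)
    (((integrable_const _).add (hnorm.const_mul _)).add (hnorm_sq.const_mul _))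
    (hf.continuous.comp (by fun_prop)).aestronglyMeasurable (ae_of_all _ fun u => ?_)
  have h := norm_sub_le_of_lipschitzWith_fderiv hf hf' x (t • u)
  rw [norm_smul, Real.norm_eq_abs] at h
  have hexpand : (‖fderiv ℝ f x‖ + K * (|t| * ‖u‖)) * (|t| * ‖u‖)
      = ‖fderiv ℝ f x‖ * |t| * ‖u‖ + K * t ^ 2 * ‖u‖ ^ 2 := by
    rw [← sq_abs t]; ring
  linarith [norm_le_norm_add_norm_sub' (f (x + t • u)) (f x)]

lemma integrable_fderiv_comp_add_smul [IsFiniteMeasure ν] (hf' : LipschitzWith K (fderiv ℝ f))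
    (hν : MemLp id 2 ν) (x : E) (t : ℝ) :
    Integrable (fun u => fderiv ℝ f (x + t • u)) ν := by
  refine Integrable.mono' (g := fun u => ‖fderiv ℝ f x‖ + K * |t| * ‖u‖)
    ((integrable_const _).add ((hν.integrable one_le_two).norm.const_mul _))
    (hf'.continuous.comp (by fun_prop)).aestronglyMeasurable (ae_of_all _ fun u => ?_)
  have h := hf'.norm_le_norm_add_mul x (x + t • u)
  rwa [add_sub_cancel_left, norm_smul, Real.norm_eq_abs, ← mul_assoc] at h

lemma hasFDerivAt_integral_comp_add_smul [IsFiniteMeasure ν] (hf : Differentiable ℝ f)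
    (hf' : LipschitzWith K (fderiv ℝ f)) (hν : MemLp id 2 ν) (x : E) (t : ℝ) :
    HasFDerivAt (fun y => ∫ u, f (y + t • u) ∂ν) (∫ u, fderiv ℝ f (x + t • u) ∂ν) x := by
  refine hasFDerivAt_integral_of_dominated_of_fderiv_le (Metric.ball_mem_nhds x one_pos)
    (bound := fun u => ‖fderiv ℝ f x‖ + K * (1 + |t| * ‖u‖))
    (.of_forall fun y => (hf.continuous.comp (by fun_prop)).aestronglyMeasurable)
    (integrable_comp_add_smul hf hf' hν x t)
    (integrable_fderiv_comp_add_smul hf' hν x t).aestronglyMeasurable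
    (ae_of_all _ fun u y hy => ?_)
    ((integrable_const _).add
      (((integrable_const 1).add ((hν.integrable one_le_two).norm.const_mul _)).const_mul _))
    (ae_of_all _ fun u y _ => (hf _).hasFDerivAt.comp y ((hasFDerivAt_id y).add_const _))
  rw [Metric.mem_ball, dist_eq_norm] at hy
  calc ‖fderiv ℝ f (y + t • u)‖ ≤ ‖fderiv ℝ f x‖ + K * ‖y + t • u - x‖ :=
        hf'.norm_le_norm_add_mul x _
    _ ≤ ‖fderiv ℝ f x‖ + K * (1 + |t| * ‖u‖) := by
        gcongr
        calc ‖y + t • u - x‖ = ‖(y - x) + t • u‖ := by congr 1; abel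
          _ ≤ 1 + |t| * ‖u‖ := by
            grw [norm_add_le, norm_smul, Real.norm_eq_abs, hy.le]

lemma norm_fderiv_integral_comp_add_smul_sub_le [CompleteSpace F] [IsProbabilityMeasure ν]
    (hf : Differentiable ℝ f) (hf' : LipschitzWith K (fderiv ℝ f)) (hν : MemLp id 2 ν)
    (x : E) (t : ℝ) :
    ‖fderiv ℝ (fun y => ∫ u, f (y + t • u) ∂ν) x - fderiv ℝ f x‖
      ≤ K * |t| * ∫ u, ‖u‖ ∂ν := by
  have hmean : ∫ u, (fderiv ℝ f (x + t • u) - fderiv ℝ f x) ∂ν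
      = ∫ u, fderiv ℝ f (x + t • u) ∂ν - fderiv ℝ f x := by
    simp [integral_sub (integrable_fderiv_comp_add_smul hf' hν x t) (integrable_const _)]
  rw [(hasFDerivAt_integral_comp_add_smul hf hf' hν x t).fderiv, ← hmean]
  calc ‖∫ u, (fderiv ℝ f (x + t • u) - fderiv ℝ f x) ∂ν‖
      ≤ ∫ u, K * |t| * ‖u‖ ∂ν := by
        refine norm_integral_le_of_norm_le ((hν.integrable one_le_two).norm.const_mul _)
          (ae_of_all _ fun u => ?_)
        have h := hf'.norm_sub_le (x + t • u) x
        rwa [add_sub_cancel_left, norm_smul, Real.norm_eq_abs, ← mul_assoc] at h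
    _ = K * |t| * ∫ u, ‖u‖ ∂ν := integral_const_mul _ _

end Smoothing

section StdGaussian

open Module
open scoped RealInnerProductSpace

variable {E : Type*} [NormedAddCommGroup E] [InnerProductSpace ℝ E] [FiniteDimensional ℝ E]
  [MeasurableSpace E] [BorelSpace E]

lemma integral_inner_sq_stdGaussian (v : E) :
    ∫ u, ⟪v, u⟫ ^ 2 ∂(ProbabilityTheory.stdGaussian E) = ‖v‖ ^ 2 := by
  have h := variance_dual_stdGaussian (innerSL ℝ v)
  rw [variance_of_integral_eq_zero (innerSL ℝ v).continuous.aemeasurable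
    (integral_strongDual_stdGaussian _), innerSL_apply_norm] at h
  simpa [innerSL_apply_apply] using h

lemma integral_norm_sq_stdGaussian :
    ∫ u, ‖u‖ ^ 2 ∂(ProbabilityTheory.stdGaussian E) = finrank ℝ E := by
  let b := stdOrthonormalBasis ℝ E
  simp_rw [← b.sum_sq_inner_right]
  rw [integral_finsetSum]
  · simp [integral_inner_sq_stdGaussian, b.orthonormal.1]
  · intro i _
    exact (IsGaussian.memLp_two_id.const_inner (b i)).integrable_sq

lemma integral_norm_stdGaussian_le :
    ∫ u, ‖u‖ ∂(ProbabilityTheory.stdGaussian E) ≤ (1 + finrank ℝ E) / 2 := by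
  have hsq : Integrable (fun u : E => ‖u‖ ^ 2) (ProbabilityTheory.stdGaussian E) :=
    IsGaussian.memLp_two_id.integrable_norm_pow two_ne_zero
  calc ∫ u, ‖u‖ ∂(ProbabilityTheory.stdGaussian E)
      ≤ ∫ u, (1 + ‖u‖ ^ 2) / 2 ∂(ProbabilityTheory.stdGaussian E) :=
        integral_mono IsGaussian.integrable_id.norm (((integrable_const 1).add hsq).div_const 2)
          fun u => by nlinarith [sq_nonneg (‖u‖ - 1)]
    _ = (1 + finrank ℝ E) / 2 := by
        rw [integral_div, integral_add (integrable_const 1) hsq, integral_norm_sq_stdGaussian]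
        simp

lemma stdGaussian_eq_stdGaussian_euclideanSpace (d : ℕ) :
    _root_.stdGaussian d = ProbabilityTheory.stdGaussian (EuclideanSpace ℝ (Fin d)) :=
  map_pi_eq_stdGaussian

end StdGaussian

lemma norm_gradient_sub_gradient {E : Type*} [NormedAddCommGroup E] [InnerProductSpace ℝ E]
    [CompleteSpace E] (f g : E → ℝ) (x y : E) :
    ‖gradient f x - gradient g y‖ = ‖fderiv ℝ f x - fderiv ℝ g y‖ := by
  rw [gradient, gradient, ← map_sub, LinearIsometryEquiv.norm_map]

theorem gradient_approximation_error_general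
    (d : ℕ) (L μ : ℝ) (hL : 0 ≤ L) (hμ : 0 < μ)
    (f : EuclideanSpace ℝ (Fin d) → ℝ)
    (hf : Differentiable ℝ f)
    (hsmooth : ∀ x y, ‖gradient f x - gradient f y‖ ≤ L * ‖x - y‖)
    (x : EuclideanSpace ℝ (Fin d)) :
    ‖gradient (fun y => ∫ u, f (y + μ • u) ∂stdGaussian d) x - gradient f x‖
      ≤ (μ / 2) * L * ((d : ℝ) + 3) ^ ((3 : ℝ) / 2) := by
  have hf' : LipschitzWith ⟨L, hL⟩ (fderiv ℝ f) := .of_dist_le_mul fun y z => by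
    rw [dist_eq_norm, dist_eq_norm, ← norm_gradient_sub_gradient]
    exact hsmooth y z
  have hdim : 1 + (d : ℝ) ≤ ((d : ℝ) + 3) ^ ((3 : ℝ) / 2) :=
    calc 1 + (d : ℝ) ≤ (d : ℝ) + 3 := by linarith
      _ ≤ ((d : ℝ) + 3) ^ ((3 : ℝ) / 2) := Real.self_le_rpow_of_one_le (by linarith) (by norm_num)
  rw [norm_gradient_sub_gradient, stdGaussian_eq_stdGaussian_euclideanSpace]
  calc _ ≤ L * |μ| * ∫ u, ‖u‖ ∂(ProbabilityTheory.stdGaussian _) :=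
        norm_fderiv_integral_comp_add_smul_sub_le hf hf' IsGaussian.memLp_two_id x μ
    _ ≤ L * μ * ((1 + d) / 2) := by
        rw [abs_of_pos hμ]
        gcongr
        simpa using integral_norm_stdGaussian_le (E := EuclideanSpace ℝ (Fin d))
    _ = (μ / 2) * L * (1 + d) := by ring
    _ ≤ (μ / 2) * L * ((d : ℝ) + 3) ^ ((3 : ℝ) / 2) := by gcongr

/-- Lemma 4: `‖∇f_μ(x) - ∇f(x)‖ ≤ (μ/2) L (d+3)^{3/2}`. -/
theorem gradient_approximation_error
    (d : ℕ) (hd : 1 ≤ d) (L μ : ℝ) (hL : 0 ≤ L) (hμ : 0 < μ)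
    (f : EuclideanSpace ℝ (Fin d) → ℝ)
    (hf : Differentiable ℝ f)
    (hsmooth : ∀ x y, ‖gradient f x - gradient f y‖ ≤ L * ‖x - y‖)
    (x : EuclideanSpace ℝ (Fin d)) :
    ‖gradient (fun y => ∫ u, f (y + μ • u) ∂stdGaussian d) x - gradient f x‖
      ≤ (μ / 2) * L * ((d : ℝ) + 3) ^ ((3 : ℝ) / 2) :=
  gradient_approximation_error_general d L μ hL hμ f hf hsmooth x
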